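/- In HOπP, let lock, unlock and a be pairwise distinct names, let R = lock(X).unlock̄⟨`0⟩.0 with X not free in the continuation (i.e., R performs an input on lock followed by an output on unlock), and let P = ā⟨`R⟩.!R and Q = ā⟨`0⟩.!R. Then P and Q are NOT reduction-closed barbed equivalent: ¬(P ≈ Q). (They are distinguished by a context that receives the transmitted term, runs it in a fresh location m, and passivates the location in the middle of its execution.) -/

import Mathlib

/-! Syntax of HOπP: processes and terms -/

mutual
inductive Proc : Type where
  | nil : Proc
  | inp : ℕ → ℕ → Proc → Proc          -- a(X).P
  | out : ℕ → Tm → Proc → Proc         -- ā⟨M⟩.P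
  | par : Proc → Proc → Proc           -- P | Q
  | loc : ℕ → Proc → Proc              -- a[P]
  | nu : ℕ → Proc → Proc               -- νa.P
  | rep : Proc → Proc                  -- !P
  | run : Tm → Proc                    -- run(M)
inductive Tm : Type where
  | var : ℕ → Tm                       -- X
  | quote : Proc → Tm                  -- `P
end

/-! Free names, free variables, substitution -/

mutual
def Proc.fn : Proc → Finset ℕ
  | .nil => ∅
  | .inp a _ P => insert a P.fn
  | .out a M P => insert a (M.fn ∪ P.fn)
  | .par P Q => P.fn ∪ Q.fn
  | .loc a P => insert a P.fn
  | .nu a P => P.fn.erase a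
  | .rep P => P.fn
  | .run M => M.fn
def Tm.fn : Tm → Finset ℕ
  | .var _ => ∅
  | .quote P => P.fn
end

mutual
def Proc.fv : Proc → Finset ℕ
  | .nil => ∅
  | .inp _ X P => P.fv.erase X
  | .out _ M P => M.fv ∪ P.fv
  | .par P Q => P.fv ∪ Q.fv
  | .loc _ P => P.fv
  | .nu _ P => P.fv
  | .rep P => P.fv
  | .run M => M.fv
def Tm.fv : Tm → Finset ℕ
  | .var X => {X}
  | .quote P => P.fv
end

mutual
def Proc.subst : Proc → ℕ → Tm → Proc
  | .nil, _, _ => .nil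
  | .inp a Y P, X, M => if Y = X then .inp a Y P else .inp a Y (P.subst X M)
  | .out a N P, X, M => .out a (N.subst X M) (P.subst X M)
  | .par P Q, X, M => .par (P.subst X M) (Q.subst X M)
  | .loc a P, X, M => .loc a (P.subst X M)
  | .nu a P, X, M => .nu a (P.subst X M)
  | .rep P, X, M => .rep (P.subst X M)
  | .run N, X, M => .run (N.subst X M)
def Tm.subst : Tm → ℕ → Tm → Tm
  | .var Y, X, M => if Y = X then M else .var Y
  | .quote P, X, M => .quote (P.subst X M)
end

/-! Labels and the labelled transition system -/

inductive Label : Type where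
  | tau : Label
  | inp : ℕ → Tm → Label               -- a(M)
  | out : List ℕ → ℕ → Tm → Label      -- ν b̃. ā⟨M⟩

def Label.bnames : Label → Finset ℕ
  | .out bs _ _ => bs.toFinset
  | _ => ∅

def Label.names : Label → Finset ℕ
  | .tau => ∅
  | .inp a M => insert a M.fn
  | .out bs a M => insert a (M.fn ∪ bs.toFinset)

def nuList (bs : List ℕ) (P : Proc) : Proc := bs.foldr Proc.nu P

inductive Step : Proc → Label → Proc → Prop where
  | hoIn {a X P M} : Step (.inp a X P) (.inp a M) (P.subst X M)
  | hoOut {a M P} : Step (.out a M P) (.out [] a M) P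
  | parL {P₁ P₂ P₁' α} : Step P₁ α P₁' → (∀ b ∈ α.bnames, b ∉ P₂.fn) →
      Step (.par P₁ P₂) α (.par P₁' P₂)
  | parR {P₁ P₂ P₂' α} : Step P₂ α P₂' → (∀ b ∈ α.bnames, b ∉ P₁.fn) →
      Step (.par P₁ P₂) α (.par P₁ P₂')
  | rep {P α P'} : Step (.par (.rep P) P) α P' → Step (.rep P) α P'
  | reactL {P₁ P₂ P₁' P₂' bs a M} : Step P₁ (.out bs a M) P₁' →
      Step P₂ (.inp a M) P₂' → (∀ b ∈ bs, b ∉ P₂.fn) →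
      Step (.par P₁ P₂) .tau (nuList bs (.par P₁' P₂'))
  | reactR {P₁ P₂ P₁' P₂' bs a M} : Step P₂ (.out bs a M) P₂' →
      Step P₁ (.inp a M) P₁' → (∀ b ∈ bs, b ∉ P₁.fn) →
      Step (.par P₁ P₂) .tau (nuList bs (.par P₁' P₂'))
  | guard {P P' α a} : Step P α P' → a ∉ α.names → Step (.nu a P) α (.nu a P')
  | extr {P P' bs a c M} : Step P (.out bs a M) P' → c ≠ a → c ∈ M.fn → c ∉ bs →
      Step (.nu c P) (.out (bs ++ [c]) a M) P'
  | transp {P P' α a} : Step P α P' → Step (.loc a P) α (.loc a P')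
  | passiv {a P} : Step (.loc a P) (.out [] a (.quote P)) .nil
  | runStep {P} : Step (.run (.quote P)) .tau P

/-- Weak internal transition ⟹ : reflexive-transitive closure of τ-steps. -/
def Weak : Proc → Proc → Prop := Relation.ReflTransGen (fun P Q => Step P .tau Q)

/-- Weak labelled transition ⟹α (with ⟹τ = ⟹). -/
def WeakStep (P : Proc) (α : Label) (Q : Proc) : Prop :=
  match α with
  | .tau => Weak P Q
  | _ => ∃ P₁ P₂, Weak P P₁ ∧ Step P₁ α P₂ ∧ Weak P₂ Q

/-! Barbs and reduction-closed barbed equivalence -/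

def Barb (P : Proc) (a : ℕ) : Prop :=
  (∃ M P', Step P (.inp a M) P') ∨ (∃ bs M P', Step P (.out bs a M) P')

def WeakBarb (P : Proc) (a : ℕ) : Prop := ∃ P', Weak P P' ∧ Barb P' a

def IsBarbedEquivCand (R : Proc → Proc → Prop) : Prop :=
  (∀ P Q, R P Q → R Q P) ∧
  (∀ P Q, R P Q → P.fv = ∅ ∧ Q.fv = ∅) ∧
  (∀ P Q, R P Q → ∀ P', Step P .tau P' → ∃ Q', Weak Q Q' ∧ R P' Q') ∧
  (∀ P Q, R P Q → ∀ a, Barb P a → WeakBarb Q a) ∧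
  (∀ P Q, R P Q → ∀ S : Proc, S.fv = ∅ → R (.par P S) (.par Q S))

/-- Reduction-closed barbed equivalence ≈. -/
def BarbedEquiv (P Q : Proc) : Prop := ∃ R, IsBarbedEquivCand R ∧ R P Q

/-! Single-hole process contexts (hole for a process) and barbed congruence -/

mutual
inductive PCtx : Type where
  | hole : PCtx
  | inp : ℕ → ℕ → PCtx → PCtx
  | outP : ℕ → Tm → PCtx → PCtx
  | outT : ℕ → TCtx → Proc → PCtx
  | parL : PCtx → Proc → PCtx
  | parR : Proc → PCtx → PCtx
  | loc : ℕ → PCtx → PCtx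
  | nu : ℕ → PCtx → PCtx
  | rep : PCtx → PCtx
  | runT : TCtx → PCtx
inductive TCtx : Type where
  | quote : PCtx → TCtx
end

mutual
def PCtx.fill : PCtx → Proc → Proc
  | .hole, P => P
  | .inp a X C, P => .inp a X (C.fill P)
  | .outP a M C, P => .out a M (C.fill P)
  | .outT a C Q, P => .out a (C.fill P) Q
  | .parL C Q, P => .par (C.fill P) Q
  | .parR Q C, P => .par Q (C.fill P)
  | .loc a C, P => .loc a (C.fill P)
  | .nu a C, P => .nu a (C.fill P)
  | .rep C, P => .rep (C.fill P)
  | .runT C, P => .run (C.fill P)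
def TCtx.fill : TCtx → Proc → Tm
  | .quote C, P => .quote (C.fill P)
end

def IsBarbedCongrCand (R : Proc → Proc → Prop) : Prop :=
  (∀ P Q, R P Q → R Q P) ∧
  (∀ P Q, R P Q → P.fv = ∅ ∧ Q.fv = ∅) ∧
  (∀ P Q, R P Q → ∀ P', Step P .tau P' → ∃ Q', Weak Q Q' ∧ R P' Q') ∧
  (∀ P Q, R P Q → ∀ a, Barb P a → WeakBarb Q a) ∧
  (∀ P Q, R P Q → ∀ C : PCtx, (C.fill P).fv = ∅ → (C.fill Q).fv = ∅ →
    R (C.fill P) (C.fill Q))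

/-- Reduction-closed barbed congruence ≈c. -/
def BarbedCongr (P Q : Proc) : Prop := ∃ R, IsBarbedCongrCand R ∧ R P Q

/-! Environments and context closures -/

abbrev Env := Set (Tm × Tm)

def envFn (E : Env) : Set ℕ := ⋃ p ∈ E, ((p.1.fn : Set ℕ) ∪ (p.2.fn : Set ℕ))
def envFnFst (E : Env) : Set ℕ := ⋃ p ∈ E, (p.1.fn : Set ℕ)
def envFnSnd (E : Env) : Set ℕ := ⋃ p ∈ E, (p.2.fn : Set ℕ)

/-- A well-formed environment: finitely many free names, variable-closed terms. -/
def GoodEnv (E : Env) : Prop :=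
  (envFn E).Finite ∧ ∀ p ∈ E, p.1.fv = ∅ ∧ p.2.fv = ∅

/-! Multi-hole contexts (holes for terms) -/

mutual
inductive CProc : Type where
  | nil : CProc
  | inp : ℕ → ℕ → CProc → CProc
  | out : ℕ → CTm → CProc → CProc
  | par : CProc → CProc → CProc
  | loc : ℕ → CProc → CProc
  | nu : ℕ → CProc → CProc
  | rep : CProc → CProc
  | run : CTm → CProc
inductive CTm : Type where
  | hole : ℕ → CTm
  | var : ℕ → CTm
  | quote : CProc → CTm
end

mutual
def CProc.fill : CProc → (ℕ → Tm) → Proc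
  | .nil, _ => .nil
  | .inp a X C, σ => .inp a X (C.fill σ)
  | .out a M C, σ => .out a (M.fill σ) (C.fill σ)
  | .par C D, σ => .par (C.fill σ) (D.fill σ)
  | .loc a C, σ => .loc a (C.fill σ)
  | .nu a C, σ => .nu a (C.fill σ)
  | .rep C, σ => .rep (C.fill σ)
  | .run M, σ => .run (M.fill σ)
def CTm.fill : CTm → (ℕ → Tm) → Tm
  | .hole i, σ => σ i
  | .var X, _ => .var X
  | .quote C, σ => .quote (C.fill σ)
end

mutual
def CProc.fn : CProc → Finset ℕ
  | .nil => ∅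
  | .inp a _ C => insert a C.fn
  | .out a M C => insert a (M.fn ∪ C.fn)
  | .par C D => C.fn ∪ D.fn
  | .loc a C => insert a C.fn
  | .nu a C => C.fn.erase a
  | .rep C => C.fn
  | .run M => M.fn
def CTm.fn : CTm → Finset ℕ
  | .hole _ => ∅
  | .var _ => ∅
  | .quote C => C.fn
end

mutual
def CProc.bn : CProc → Finset ℕ
  | .nil => ∅
  | .inp _ _ C => C.bn
  | .out _ M C => M.bn ∪ C.bn
  | .par C D => C.bn ∪ D.bn
  | .loc _ C => C.bn
  | .nu a C => insert a C.bn
  | .rep C => C.bn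
  | .run M => M.bn
def CTm.bn : CTm → Finset ℕ
  | .hole _ => ∅
  | .var _ => ∅
  | .quote C => C.bn
end

mutual
def CProc.holes : CProc → Finset ℕ
  | .nil => ∅
  | .inp _ _ C => C.holes
  | .out _ M C => M.holes ∪ C.holes
  | .par C D => C.holes ∪ D.holes
  | .loc _ C => C.holes
  | .nu _ C => C.holes
  | .rep C => C.holes
  | .run M => M.holes
def CTm.holes : CTm → Finset ℕ
  | .hole i => {i}
  | .var _ => ∅
  | .quote C => C.holes
end

/-- Process context closure E⋆r. -/
def procClosure (E : Env) (r : Set ℕ) : Set (Proc × Proc) :=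
  { pq | ∃ (C : CProc) (σ τ : ℕ → Tm),
      (∀ i ∈ C.holes, (σ i, τ i) ∈ E) ∧
      (∀ b ∈ C.bn, (b : ℕ) ∉ envFn E ∪ r) ∧
      ((C.fn : Set ℕ) ⊆ r) ∧
      pq.1 = C.fill σ ∧ pq.2 = C.fill τ }

/-- Term context closure E∘r. -/
def termClosure (E : Env) (r : Set ℕ) : Env :=
  E ∪ { mn | ∃ P Q, (P, Q) ∈ procClosure E r ∧ mn = (Tm.quote P, Tm.quote Q) }

/-! Structural congruence -/

inductive SC : Proc → Proc → Prop where
  | refl (P) : SC P P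
  | symm {P Q} : SC P Q → SC Q P
  | trans {P Q R} : SC P Q → SC Q R → SC P R
  | inpC {P Q a X} : SC P Q → SC (.inp a X P) (.inp a X Q)
  | outC {P Q a M} : SC P Q → SC (.out a M P) (.out a M Q)
  | parC {P P' Q Q'} : SC P P' → SC Q Q' → SC (.par P Q) (.par P' Q')
  | locC {P Q a} : SC P Q → SC (.loc a P) (.loc a Q)
  | nuC {P Q a} : SC P Q → SC (.nu a P) (.nu a Q)
  | repC {P Q} : SC P Q → SC (.rep P) (.rep Q)
  | parNil (P) : SC (.par P .nil) P
  | parComm (P Q) : SC (.par P Q) (.par Q P)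
  | parAssoc (P Q R) : SC (.par (.par P Q) R) (.par P (.par Q R))
  | nuNil (a) : SC (.nu a .nil) .nil
  | nuSwap (a b P) : SC (.nu a (.nu b P)) (.nu b (.nu a P))
  | nuPar {a} (P Q) : a ∉ Q.fn → SC (.par (.nu a P) Q) (.nu a (.par P Q))
  | repUnfold (P) : SC (.rep P) (.par P (.rep P))

/-! Environmental relations and bisimulations -/

abbrev ERel := Finset ℕ → Env → Proc → Proc → Prop

/-- Well-formedness of an environmental relation. -/
def IsEnvRel (X : ERel) : Prop :=
  ∀ r E P Q, X r E P Q → GoodEnv E ∧ P.fv = ∅ ∧ Q.fv = ∅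

/-- The six clauses of environmental bisimulation, with conclusions in `Y`
    (clause 5 unchanged, in `X`). -/
def BisimClauses (X Y : ERel) : Prop :=
  ∀ r E P Q, X r E P Q →
    (∀ P', Step P .tau P' → ∃ Q', Weak Q Q' ∧ Y r E P' Q') ∧
    (∀ a M N P', a ∈ r → (M, N) ∈ termClosure E ↑r → Step P (.inp a M) P' →
      ∃ Q', WeakStep Q (.inp a N) Q' ∧ Y r E P' Q') ∧
    (∀ bs a M P', a ∈ r → (∀ b ∈ bs, b ∉ (↑r : Set ℕ) ∪ envFnFst E) →
      Step P (.out bs a M) P' →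
      ∃ cs N Q', (∀ c ∈ cs, c ∉ (↑r : Set ℕ) ∪ envFnSnd E) ∧
        WeakStep Q (.out cs a N) Q' ∧ Y r (insert (M, N) E) P' Q') ∧
    (∀ P₁ Q₁ a, (Tm.quote P₁, Tm.quote Q₁) ∈ E → a ∈ r →
      Y r E (.par P (.loc a P₁)) (.par Q (.loc a Q₁))) ∧
    (∀ n, n ∉ envFn E → n ∉ P.fn → n ∉ Q.fn → X (insert n r) E P Q) ∧
    (∀ Q', Step Q .tau Q' → ∃ P', Weak P P' ∧ Y r E P' Q') ∧
    (∀ a M N Q', a ∈ r → (M, N) ∈ termClosure E ↑r → Step Q (.inp a N) Q' →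
      ∃ P', WeakStep P (.inp a M) P' ∧ Y r E P' Q') ∧
    (∀ cs a N Q', a ∈ r → (∀ c ∈ cs, c ∉ (↑r : Set ℕ) ∪ envFnSnd E) →
      Step Q (.out cs a N) Q' →
      ∃ bs M P', (∀ b ∈ bs, b ∉ (↑r : Set ℕ) ∪ envFnFst E) ∧
        WeakStep P (.out bs a M) P' ∧ Y r (insert (M, N) E) P' Q')

/-- Environmental bisimulation. -/
def IsEnvBisim (X : ERel) : Prop := IsEnvRel X ∧ BisimClauses X X

/-- Environmental bisimilarity ∼, the union of all environmental bisimulations. -/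
def EnvBisimilar : ERel := fun r E P Q => ∃ X, IsEnvBisim X ∧ X r E P Q

/-- X⁻: up to context, environment, restriction and structural congruence. -/
def UpTo (X : ERel) : ERel := fun r E P Q =>
  ∃ (cs ds : List ℕ) (P₀ P₁ Q₀ Q₁ : Proc) (r' : Finset ℕ) (E' : Env),
    SC P (nuList cs (.par P₀ P₁)) ∧ SC Q (nuList ds (.par Q₀ Q₁)) ∧
    X r' E' P₀ Q₀ ∧ (P₁, Q₁) ∈ procClosure E' ↑r' ∧
    E ⊆ termClosure E' ↑r' ∧ (↑r : Set ℕ) ⊆ (↑r' : Set ℕ) ∧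
    (∀ c ∈ cs, c ∉ (↑r : Set ℕ) ∪ envFnFst E) ∧
    (∀ d ∈ ds, d ∉ (↑r : Set ℕ) ∪ envFnSnd E)

/-- Environmental bisimulation up-to context. -/
def IsEnvBisimUpTo (X : ERel) : Prop := IsEnvRel X ∧ BisimClauses X (UpTo X)

/-! Simple processes, environments, relations -/

mutual
def Proc.simple : Proc → Prop
  | .nil => True
  | .inp _ X P => X ∉ P.fv ∧ P.simple
  | .out _ M P => M.simple ∧ P.simple
  | .par P Q => P.simple ∧ Q.simple
  | .loc _ P => P.simple
  | .nu _ _ => False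
  | .rep P => P.simple
  | .run M => M.simple
def Tm.simple : Tm → Prop
  | .var _ => True
  | .quote P => P.simple
end

def SimpleEnv (E : Env) : Prop := ∀ p ∈ E, p.1.simple ∧ p.2.simple

def SimpleERel (X : ERel) : Prop := ∀ r E P Q, X r E P Q → SimpleEnv E

/-! Run-erasure -/

mutual
/-- P ≤ Q : P is obtained from Q by (repeatedly) replacing subprocesses run(`R) by R. -/
inductive REp : Proc → Proc → Prop where
  | nil : REp .nil .nil
  | inp {P P' a X} : REp P P' → REp (.inp a X P) (.inp a X P')
  | out {M M' P P' a} : REt M M' → REp P P' → REp (.out a M P) (.out a M' P')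
  | par {P P' Q Q'} : REp P P' → REp Q Q' → REp (.par P Q) (.par P' Q')
  | loc {P P' a} : REp P P' → REp (.loc a P) (.loc a P')
  | nu {P P' a} : REp P P' → REp (.nu a P) (.nu a P')
  | rep {P P'} : REp P P' → REp (.rep P) (.rep P')
  | run {M M'} : REt M M' → REp (.run M) (.run M')
  | runErase {P Q} : REp P Q → REp P (.run (.quote Q))
inductive REt : Tm → Tm → Prop where
  | var {X} : REt (.var X) (.var X)
  | quote {P Q} : REp P Q → REt (.quote P) (.quote Q)
end

/-- ≤E≥ : run-erasure closure of an environment. -/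
def reEnv (E : Env) : Env :=
  { mn | ∃ m' n', (m', n') ∈ E ∧ REt mn.1 m' ∧ REt mn.2 n' }

/-- X⁻≤ : composition of run-erasure with X⁻ on the run-erased environment. -/
def UpToRE (X : ERel) : ERel := fun r E P Q =>
  ∃ P' Q', REp P P' ∧ REp Q Q' ∧ UpTo X r (reEnv E) P' Q'


/-!
The observer `a(X).(m[run X] | lock̄⟨`0⟩.m(X).d̄⟨`0⟩)` tells the two processes apart. Next to `P`
it runs the received `R` inside `m`, lets it take the lock and passivates `m` before `R` can
release it; this reaches a stuck state that signals on `d` but never on `unlock`. Next to `Q`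
only a copy of `R` spawned by `!R` can take the lock, and its `unlock` output then stays pending
forever because nobody listens on `unlock`; so every derivative of `Q | observer` that signals
on `d` also signals on `unlock`. Matching the passivating run of `P | observer` and then swapping
sides forces the stuck state to signal on `unlock`.
-/

namespace Proc

def inputChannels : Proc → Finset ℕ
  | .nil => ∅
  | .inp c _ _ => {c}
  | .out _ _ _ => ∅
  | .par P Q => P.inputChannels ∪ Q.inputChannels
  | .loc _ P => P.inputChannels
  | .nu _ P => P.inputChannels
  | .rep P => P.inputChannels
  | .run _ => ∅

def outputChannels : Proc → Finset ℕ
  | .nil => ∅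
  | .inp _ _ _ => ∅
  | .out c _ _ => {c}
  | .par P Q => P.outputChannels ∪ Q.outputChannels
  | .loc c P => insert c P.outputChannels
  | .nu _ P => P.outputChannels
  | .rep P => P.outputChannels
  | .run _ => ∅

end Proc

namespace Step

theorem mem_inputChannels {P P' : Proc} {c : ℕ} {M : Tm} (h : Step P (.inp c M) P') :
    c ∈ P.inputChannels := by
  generalize hα : Label.inp c M = α at h
  induction h <;> simp_all [Proc.inputChannels]

theorem mem_outputChannels {P P' : Proc} {bs : List ℕ} {c : ℕ} {M : Tm}
    (h : Step P (.out bs c M) P') : c ∈ P.outputChannels := by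
  generalize hα : Label.out bs c M = α at h
  induction h generalizing bs <;> cases hα <;> simp_all [Proc.outputChannels]

end Step

theorem Barb.mem_channels {P : Proc} {c : ℕ} (h : Barb P c) :
    c ∈ P.inputChannels ∪ P.outputChannels := by
  rcases h with ⟨M, P', h⟩ | ⟨bs, M, P', h⟩
  · exact Finset.mem_union_left _ h.mem_inputChannels
  · exact Finset.mem_union_right _ h.mem_outputChannels

def OutBarb (P : Proc) (c : ℕ) : Prop := ∃ M P', Step P (.out [] c M) P'

theorem OutBarb.barb {P : Proc} {c : ℕ} (h : OutBarb P c) : Barb P c :=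
  let ⟨M, P', h⟩ := h; .inr ⟨[], M, P', h⟩

theorem OutBarb.par_left {P : Proc} {c : ℕ} (h : OutBarb P c) (Q : Proc) :
    OutBarb (.par P Q) c :=
  let ⟨M, P', h⟩ := h; ⟨M, _, .parL h (by simp [Label.bnames])⟩

theorem OutBarb.par_right {Q : Proc} {c : ℕ} (h : OutBarb Q c) (P : Proc) :
    OutBarb (.par P Q) c :=
  let ⟨M, Q', h⟩ := h; ⟨M, _, .parR h (by simp [Label.bnames])⟩

theorem Weak.invariant {I : Proc → Prop} (hI : ∀ P P', I P → Step P .tau P' → I P')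
    {P P' : Proc} (hP : I P) (w : Weak P P') : I P' := by
  induction w with
  | refl => exact hP
  | tail _ h ih => exact hI _ _ ih h

theorem Weak.eq_of_stuck {P P' : Proc} (hP : ∀ P'', ¬ Step P .tau P'') (w : Weak P P') :
    P' = P :=
  Weak.invariant (I := (· = P)) (fun _ _ hQ h => absurd (hQ ▸ h) (hP _)) rfl w

theorem WeakBarb.barb_of_stuck {P : Proc} {c : ℕ} (hP : ∀ P', ¬ Step P .tau P')
    (h : WeakBarb P c) : Barb P c := by
  obtain ⟨P', w, hb⟩ := h
  rwa [Weak.eq_of_stuck hP w] at hb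

theorem Weak.exists_of_simulation {R : Proc → Proc → Prop}
    (hsim : ∀ P Q, R P Q → ∀ P', Step P .tau P' → ∃ Q', Weak Q Q' ∧ R P' Q')
    {P P' Q : Proc} (hPQ : R P Q) (w : Weak P P') :
    ∃ Q', Weak Q Q' ∧ R P' Q' := by
  induction w with
  | refl => exact ⟨Q, .refl, hPQ⟩
  | tail _ h ih =>
    obtain ⟨Q₁, w₁, h₁⟩ := ih
    obtain ⟨Q₂, w₂, h₂⟩ := hsim _ _ h₁ _ h
    exact ⟨Q₂, w₁.trans w₂, h₂⟩

section Locker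

variable (lock unlock X : ℕ)

abbrev locker : Proc := .inp lock X (.out unlock (.quote .nil) .nil)

inductive LockerState : Proc → Prop
  | nil : LockerState .nil
  | unlocking : LockerState (.out unlock (.quote .nil) .nil)
  | locker : LockerState (locker lock unlock X)
  | rep : LockerState (.rep (locker lock unlock X))
  | par {P Q : Proc} : LockerState P → LockerState Q → LockerState (.par P Q)

variable {lock unlock X}

theorem LockerState.channels_subset {P : Proc} (hP : LockerState lock unlock X P) :
    P.inputChannels ⊆ {lock} ∧ P.outputChannels ⊆ {unlock} := by
  induction hP with
  | par _ _ ih₁ ih₂ =>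
    simp only [Proc.inputChannels, Proc.outputChannels]
    exact ⟨Finset.union_subset ih₁.1 ih₂.1, Finset.union_subset ih₁.2 ih₂.2⟩
  | _ => simp [Proc.inputChannels, Proc.outputChannels]

theorem LockerState.not_mem_channels {P : Proc} {c : ℕ} (hP : LockerState lock unlock X P)
    (hl : c ≠ lock) (hu : c ≠ unlock) : c ∉ P.inputChannels ∪ P.outputChannels := by
  have ⟨hin, hout⟩ := hP.channels_subset
  rw [Finset.mem_union, not_or]
  exact ⟨fun h => hl (Finset.mem_singleton.mp (hin h)),
    fun h => hu (Finset.mem_singleton.mp (hout h))⟩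

theorem LockerState.false_of_comm (hlu : lock ≠ unlock) {P Q P' Q' : Proc} {bs : List ℕ}
    {c : ℕ} {M : Tm} (hP : LockerState lock unlock X P) (hQ : LockerState lock unlock X Q)
    (hout : Step P (.out bs c M) P') (hin : Step Q (.inp c M) Q') : False :=
  hlu <| (Finset.mem_singleton.mp (hQ.channels_subset.1 hin.mem_inputChannels)).symm.trans
    (Finset.mem_singleton.mp (hP.channels_subset.2 hout.mem_outputChannels))

theorem LockerState.step (hlu : lock ≠ unlock) {P P' : Proc} {α : Label}
    (hP : LockerState lock unlock X P) (h : Step P α P') :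
    LockerState lock unlock X P' ∧
      ((∃ M, α = .inp lock M ∧ OutBarb P' unlock) ∨ ∃ M, α = .out [] unlock M) := by
  induction h with
  | hoIn =>
    cases hP
    simp only [Proc.subst, Tm.subst]
    exact ⟨.unlocking, .inl ⟨_, rfl, _, _, .hoOut⟩⟩
  | hoOut => cases hP; exact ⟨.nil, .inr ⟨_, rfl⟩⟩
  | parL _ _ ih =>
    cases hP with
    | par hP hQ =>
      obtain ⟨hP', hα⟩ := ih hP
      exact ⟨hP'.par hQ, hα.imp (fun ⟨M, hM, hU⟩ => ⟨M, hM, hU.par_left _⟩) id⟩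
  | parR _ _ ih =>
    cases hP with
    | par hP hQ =>
      obtain ⟨hQ', hα⟩ := ih hQ
      exact ⟨hP.par hQ', hα.imp (fun ⟨M, hM, hU⟩ => ⟨M, hM, hU.par_right _⟩) id⟩
  | rep _ ih => cases hP; exact ih (.par .rep .locker)
  | reactL hout hin =>
    cases hP with
    | par hP hQ => exact (LockerState.false_of_comm hlu hP hQ hout hin).elim
  | reactR hout hin =>
    cases hP with
    | par hP hQ => exact (LockerState.false_of_comm hlu hQ hP hout hin).elim
  | _ => cases hP

end Locker

inductive Inert : Proc → Prop
  | nil : Inert .nil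
  | run {P : Proc} : Inert P → Inert (.run (.quote P))

theorem Inert.step {P P' : Proc} {α : Label} (hP : Inert P) (h : Step P α P') :
    α = .tau ∧ Inert P' := by
  cases hP with
  | nil => cases h
  | run hP => cases h; exact ⟨rfl, hP⟩

theorem Inert.channels_eq {P : Proc} (hP : Inert P) :
    P.inputChannels = ∅ ∧ P.outputChannels = ∅ := by
  cases hP <;> simp [Proc.inputChannels, Proc.outputChannels]

theorem Inert.step_loc {m : ℕ} {P Q : Proc} {α : Label} (hP : Inert P)
    (h : Step (.loc m P) α Q) :
    (α = .tau ∧ ∃ P', Inert P' ∧ Q = .loc m P') ∨ (α = .out [] m (.quote P) ∧ Q = .nil) := by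
  cases h with
  | transp h => obtain ⟨rfl, hP'⟩ := hP.step h; exact .inl ⟨rfl, _, hP', rfl⟩
  | passiv => exact .inr ⟨rfl, rfl⟩

section Observer

variable (a lock m d X : ℕ)

abbrev awaitPassivation : Proc := .inp m X (.out d (.quote .nil) .nil)

abbrev observer : Proc :=
  .inp a X (.par (.loc m (.run (.var X))) (.out lock (.quote .nil) (awaitPassivation m d X)))

inductive ObserverState : Bool → Proc → Prop
  | locking {P : Proc} : Inert P →
      ObserverState false (.par (.loc m P) (.out lock (.quote .nil) (awaitPassivation m d X)))
  | passivating {P : Proc} : Inert P →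
      ObserverState true (.par (.loc m P) (awaitPassivation m d X))
  | signalling : ObserverState true (.par .nil (.out d (.quote .nil) .nil))

variable {lock m d X}

theorem ObserverState.step_tau {b : Bool} {C C' : Proc} (hC : ObserverState lock m d X b C)
    (h : Step C .tau C') : ObserverState lock m d X b C' := by
  cases hC with
  | locking hP =>
    cases h with
    | parL h =>
      rcases hP.step_loc h with ⟨-, P', hP', rfl⟩ | ⟨⟨⟩, -⟩
      exact .locking hP'
    | parR h => cases h
    | reactL _ hin => cases hin
    | reactR hout hin =>
      cases hout
      exact absurd (hP.step_loc hin) (by simp)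
  | passivating hP =>
    cases h with
    | parL h =>
      rcases hP.step_loc h with ⟨-, P', hP', rfl⟩ | ⟨⟨⟩, -⟩
      exact .passivating hP'
    | parR h => cases h
    | reactL hout hin =>
      rcases hP.step_loc hout with ⟨⟨⟩, -⟩ | ⟨⟨⟩, rfl⟩
      cases hin
      simpa [Proc.subst, Tm.subst, nuList] using .signalling
    | reactR hout => cases hout
  | signalling =>
    cases h with
    | parL h => cases h
    | parR h => cases h
    | reactL hout => cases hout
    | reactR _ hin => cases hin

theorem ObserverState.step_out_lock (hml : m ≠ lock) (hdl : d ≠ lock) {b : Bool} {C C' : Proc}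
    {bs : List ℕ} {M : Tm} (hC : ObserverState lock m d X b C) (h : Step C (.out bs lock M) C') :
    bs = [] ∧ ObserverState lock m d X true C' := by
  cases hC with
  | locking hP =>
    cases h with
    | parL h => exact absurd (hP.step_loc h) (by simp [hml.symm])
    | parR h => cases h; exact ⟨rfl, .passivating hP⟩
  | passivating hP =>
    cases h with
    | parL h => exact absurd (hP.step_loc h) (by simp [hml.symm])
    | parR h => cases h
  | signalling =>
    cases h with
    | parL h => cases h
    | parR h => cases h; exact absurd rfl hdl

theorem ObserverState.inputChannels_subset {b : Bool} {C : Proc}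
    (hC : ObserverState lock m d X b C) : C.inputChannels ⊆ {m} := by
  cases hC with
  | signalling => simp [Proc.inputChannels]
  | _ hP => simp [Proc.inputChannels, hP.channels_eq.1]

theorem ObserverState.eq_true_of_mem_channels (hdm : d ≠ m) (hdl : d ≠ lock) {b : Bool}
    {C : Proc} (hC : ObserverState lock m d X b C)
    (hd : d ∈ C.inputChannels ∪ C.outputChannels) : b = true := by
  cases hC with
  | locking hP => simp [Proc.inputChannels, Proc.outputChannels, hP.channels_eq, hdm, hdl] at hd
  | _ => rfl

end Observer

section Observation

variable (a lock unlock m d X : ℕ)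

-- Invariant of the τ-derivatives of `Q | observer`: once the observer's lock output is consumed,
-- the copy of `locker` that took it still offers `unlock`.
inductive Config : Proc → Prop
  | initial : Config (.par (.out a (.quote .nil) (.rep (locker lock unlock X)))
      (observer a lock m d X))
  | running {P C : Proc} {b : Bool} : LockerState lock unlock X P →
      ObserverState lock m d X b C → (b = true → OutBarb P unlock) → Config (.par P C)

variable {a lock unlock m d X}

theorem Config.step_tau (hlu : lock ≠ unlock) (hml : m ≠ lock) (hmu : m ≠ unlock)
    (hdl : d ≠ lock) {Q Q' : Proc} (hQ : Config a lock unlock m d X Q) (h : Step Q .tau Q') :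
    Config a lock unlock m d X Q' := by
  cases hQ with
  | initial =>
    cases h with
    | parL h => cases h
    | parR h => cases h
    | reactL hout hin =>
      cases hout; cases hin
      simpa [Proc.subst, Tm.subst, nuList] using
        Config.running (b := false) .rep (.locking (.run .nil)) (fun h => nomatch h)
    | reactR hout => cases hout
  | running hP hC hU =>
    cases h with
    | parL h => obtain ⟨-, ⟨_, ⟨⟩, -⟩ | ⟨_, ⟨⟩⟩⟩ := hP.step hlu h
    | parR h => exact .running hP (hC.step_tau h) hU
    | reactL hout hin =>
      obtain ⟨-, ⟨_, ⟨⟩, -⟩ | ⟨_, ⟨⟩⟩⟩ := hP.step hlu hout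
      have := Finset.mem_singleton.mp (hC.inputChannels_subset hin.mem_inputChannels)
      exact (hmu this.symm).elim
    | reactR hout hin =>
      obtain ⟨hP', ⟨_, ⟨⟩, hU'⟩ | ⟨_, ⟨⟩⟩⟩ := hP.step hlu hin
      obtain ⟨rfl, hC'⟩ := hC.step_out_lock hml hdl hout
      exact .running hP' hC' fun _ => hU'

theorem Config.barb_unlock_of_barb (hda : d ≠ a) (hdl : d ≠ lock) (hdu : d ≠ unlock)
    (hdm : d ≠ m) {Q : Proc} (hQ : Config a lock unlock m d X Q) (hd : Barb Q d) :
    Barb Q unlock := by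
  have hch := hd.mem_channels
  cases hQ with
  | initial => simp [Proc.inputChannels, Proc.outputChannels, hda] at hch
  | running hP hC hU =>
    have hPd := hP.not_mem_channels hdl hdu
    refine ((hU (hC.eq_true_of_mem_channels hdm hdl ?_)).par_left _).barb
    simp only [Proc.inputChannels, Proc.outputChannels, Finset.mem_union] at hch hPd ⊢
    tauto

end Observation

section Distinguishing

variable (lock unlock d X : ℕ)

abbrev passivated : Proc :=
  .par (.rep (locker lock unlock X)) (.par .nil (.out d (.quote .nil) .nil))

variable {lock unlock d X} {a m : ℕ}

theorem observer_fv : (observer a lock m d X).fv = ∅ := by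
  simp [Proc.fv, Tm.fv]

theorem weak_passivate_locker :
    Weak (.par (.out a (.quote (locker lock unlock X)) (.rep (locker lock unlock X)))
        (observer a lock m d X))
      (passivated lock unlock d X) := by
  have receive : Step
      (.par (.out a (.quote (locker lock unlock X)) (.rep (locker lock unlock X)))
        (observer a lock m d X)) .tau
      (.par (.rep (locker lock unlock X)) (.par (.loc m (.run (.quote (locker lock unlock X))))
        (.out lock (.quote .nil) (awaitPassivation m d X)))) := by
    convert Step.reactL .hoOut .hoIn (by simp) using 3
    simp [Proc.subst, Tm.subst, nuList]
  exact .head receive <|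
    .head (.parR (.parL (.transp .runStep) (by simp [Label.bnames])) (by simp [Label.bnames])) <|
    .head (.parR (.reactR .hoOut (.transp .hoIn) (by simp)) (by simp [Label.bnames])) <|
    .single (.parR (.reactL .passiv .hoIn (by simp)) (by simp [Label.bnames]))

theorem passivated_stuck (hlu : lock ≠ unlock) (hdl : d ≠ lock) (P : Proc) :
    ¬ Step (passivated lock unlock d X) .tau P := by
  intro h
  cases h with
  | parL h => obtain ⟨-, ⟨_, ⟨⟩, -⟩ | ⟨_, ⟨⟩⟩⟩ := LockerState.rep.step hlu h
  | parR h =>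
    cases h with
    | parL h => cases h
    | parR h => cases h
    | reactL h => cases h
    | reactR _ h => cases h
  | reactL hout => simpa [Proc.outputChannels] using hout.mem_outputChannels
  | reactR hout hin =>
    obtain ⟨-, ⟨_, ⟨⟩, -⟩ | ⟨_, ⟨⟩⟩⟩ := LockerState.rep.step hlu hin
    simpa [Proc.outputChannels, hdl.symm] using hout.mem_outputChannels

theorem passivated_not_barb_unlock (hlu : lock ≠ unlock) (hdu : d ≠ unlock) :
    ¬ Barb (passivated lock unlock d X) unlock := by
  intro h
  simpa [Proc.inputChannels, Proc.outputChannels, hlu.symm, hdu.symm] using h.mem_channels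

theorem passivated_barb :
    Barb (passivated lock unlock d X) d :=
  ((OutBarb.par_right ⟨_, _, .hoOut⟩ _).par_right _).barb

end Distinguishing

/-- with R = lock(X).unlock̄⟨`0⟩.0, the processes
ā⟨`R⟩.!R and ā⟨`0⟩.!R are NOT reduction-closed barbed equivalent. -/
theorem not_barbed_equiv (lock unlock a : ℕ)
    (h1 : lock ≠ unlock) (h2 : lock ≠ a) (h3 : unlock ≠ a) (X : ℕ) :
    ¬ BarbedEquiv
      (.out a (.quote (.inp lock X (.out unlock (.quote .nil) .nil)))
        (.rep (.inp lock X (.out unlock (.quote .nil) .nil))))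
      (.out a (.quote .nil)
        (.rep (.inp lock X (.out unlock (.quote .nil) .nil)))) := by
  rintro ⟨R, ⟨hsymm, -, htau, hbarb, hpar⟩, hPQ⟩
  set m := lock + unlock + a + 1
  set d := m + 1
  have hstuck := passivated_stuck (X := X) h1 (show d ≠ lock by omega)
  obtain ⟨Q₁, hQ₁, hR₁⟩ := Weak.exists_of_simulation htau
    (hpar _ _ hPQ _ (observer_fv (m := m) (d := d))) weak_passivate_locker
  obtain ⟨Q₂, hQ₂, hd⟩ := hbarb _ _ hR₁ d passivated_barb
  have hconfig : Config a lock unlock m d X Q₂ :=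
    Weak.invariant (fun _ _ hQ => hQ.step_tau h1 (by omega) (by omega) (by omega))
      .initial (hQ₁.trans hQ₂)
  have hunlock := hconfig.barb_unlock_of_barb (by omega) (by omega) (by omega) (by omega) hd
  obtain ⟨P₂, hP₂, hR₂⟩ := Weak.exists_of_simulation htau (hsymm _ _ hR₁) hQ₂
  rw [Weak.eq_of_stuck hstuck hP₂] at hR₂
  exact passivated_not_barb_unlock h1 (by omega)
    ((hbarb _ _ hR₂ unlock hunlock).barb_of_stuck hstuck)
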